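/- For a convex lower semicontinuous φ: ℝ₊ → (-∞,+∞] with φ(1) = 0, and an empirical measure P̂ₙ on n atoms with bounded loss ℓ(θ,·), strong duality holds: sup_{Q : D_φ(Q, P̂ₙ) ≤ δ} E_Q[ℓ(θ, ξ)] = inf_{λ ≥ 0, μ ∈ ℝ} { E_{P̂ₙ}[λ φ*((ℓ(θ,ξ) − μ)/λ)] + λδ + μ }, where φ*(s) = sup_{t ≥ 0}(s·t − φ(t)) is the convex conjugate of φ. -/

import Mathlib

/-!
The primal problem is a finite-dimensional convex program in the weights `q` (linear objective,
the convex constraint `D_φ(q) ≤ δ` and the linear constraint `∑ qᵢ = 1`), and the uniform weights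
are a Slater point because `φ 1 = 0 < δ`. Separating `(0, 1, v)`, with `v` the primal value, from
the convex set of attainable (constraint, mass, objective) triples gives multipliers `λ ≥ 0`, `μ`
whose Lagrangian is at most `v` on the whole orthant. In the coordinates `tᵢ = n qᵢ` the Lagrangian
is separable, and its supremum over the orthant is the dual objective as soon as `λ > 0`. To stay
away from the perspective at `λ = 0`, `λ` is raised by `e > 0` and `μ` shifted along a subgradient
of `φ` at `1`, which costs only `e δ`. Weak duality is the Fenchel–Young inequality, term by term.
-/

open MeasureTheory Filter

/-- Convex conjugate of φ restricted to t ≥ 0, valued in extended reals: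
φ*(s) = sup_{t ≥ 0} (s·t − φ(t)). -/
noncomputable def phiConj (φ : ℝ → ℝ) (s : ℝ) : EReal :=
  ⨆ t : {t : ℝ // 0 ≤ t}, ((s * t.1 - φ t.1 : ℝ) : EReal)

/-- The perspective λ·φ*(s/λ), interpreted at λ = 0 as the limit as λ → 0⁺. -/
noncomputable def phiPerspective (φ : ℝ → ℝ) (lam s : ℝ) : EReal :=
  if lam = 0 then
    Filter.limsup (fun l : ℝ => (l : EReal) * phiConj φ (s / l)) (nhdsWithin 0 (Set.Ioi 0))
  else (lam : EReal) * phiConj φ (s / lam)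

open Set Finset Topology

theorem ConvexOn.exists_affine_le {S : Set ℝ} {f : ℝ → ℝ} (hf : ConvexOn ℝ S f) {x : ℝ}
    (hx : x ∈ interior S) : ∃ k : ℝ, ∀ y ∈ S, f x + k * (y - x) ≤ f y := by
  refine ⟨derivWithin f (Ioi x) x, fun y hy => ?_⟩
  rcases lt_trichotomy y x with hyx | rfl | hxy
  · have h := (hf.slope_le_leftDeriv_of_mem_interior hy hx hyx).trans
      (hf.leftDeriv_le_rightDeriv_of_mem_interior hx)
    rw [slope_def_field, div_le_iff₀ (sub_pos.2 hyx)] at h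
    linarith
  · simp
  · have h := hf.rightDeriv_le_slope_of_mem_interior hx hy hxy
    rw [slope_def_field, le_div_iff₀ (sub_pos.2 hxy)] at h
    linarith

section SeparableSum

variable {ι α : Type*} [Fintype ι] {g : ι → α → ℝ} {B : ℝ}

theorem bddAbove_range_of_forall_sum_le [Nonempty α] (h : ∀ x : ι → α, ∑ i, g i (x i) ≤ B)
    (i : ι) : BddAbove (range (g i)) := by
  classical
  obtain ⟨a₀⟩ := ‹Nonempty α›
  refine ⟨B - ∑ j ∈ univ.erase i, g j a₀, forall_mem_range.2 fun a => ?_⟩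
  have h' := h (Function.update (fun _ => a₀) i a)
  rw [← add_sum_erase _ _ (mem_univ i), Function.update_self,
    sum_congr rfl fun j hj => by rw [Function.update_of_ne (ne_of_mem_erase hj)]] at h'
  linarith

theorem sum_ciSup_le_of_forall_sum_le [Nonempty α] (h : ∀ x : ι → α, ∑ i, g i (x i) ≤ B) :
    ∑ i, ⨆ a, g i a ≤ B := by
  refine le_of_forall_pos_le_add fun η hη => ?_
  set N : ℝ := Fintype.card ι + 1
  have hN : 0 < N := by positivity
  choose x hx using fun i => exists_lt_of_lt_ciSup (sub_lt_self (⨆ a, g i a) (div_pos hη hN))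
  calc ∑ i, ⨆ a, g i a ≤ ∑ i, (g i (x i) + η / N) := sum_le_sum fun i _ => by linarith [hx i]
    _ = ∑ i, g i (x i) + Fintype.card ι / N * η := by
      rw [sum_add_distrib, sum_const, card_univ, nsmul_eq_mul]; ring
    _ ≤ B + η := by
      gcongr
      · exact h x
      · exact mul_le_of_le_one_left hη.le ((div_le_one hN).2 (by linarith))

end SeparableSum

section LagrangeMultipliers

variable {E : Type*} [AddCommGroup E] [Module ℝ E]

def valueSet (C : Set E) (f g h : E → ℝ) : Set (ℝ × ℝ × ℝ) :=
  {p | ∃ x ∈ C, g x ≤ p.1 ∧ h x = p.2.1 ∧ p.2.2 ≤ f x}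

variable {C : Set E} {f g : E → ℝ}

theorem convex_valueSet (hf : ConcaveOn ℝ C f) (hg : ConvexOn ℝ C g) (h : E →ₗ[ℝ] ℝ) :
    Convex ℝ (valueSet C f g h) := by
  rintro p ⟨x, hx, hgx, hhx, hfx⟩ p' ⟨y, hy, hgy, hhy, hfy⟩ a b ha hb hab
  refine ⟨a • x + b • y, hg.1 hx hy ha hb hab, ?_, by simp [hhx, hhy], ?_⟩
  · calc g (a • x + b • y) ≤ a • g x + b • g y := hg.2 hx hy ha hb hab
      _ ≤ (a • p + b • p').1 := by simp only [Prod.fst_add, Prod.smul_fst, smul_eq_mul]; gcongr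
  · calc (a • p + b • p').2.2 ≤ a • f x + b • f y := by
          simp only [Prod.snd_add, Prod.smul_snd, smul_eq_mul]; gcongr
      _ ≤ f (a • x + b • y) := hf.2 hx hy ha hb hab

theorem StrongDual.apply_prod_prod (F : StrongDual ℝ (ℝ × ℝ × ℝ)) (p : ℝ × ℝ × ℝ) :
    F p = p.1 * F (1, 0, 0) + p.2.1 * F (0, 1, 0) + p.2.2 * F (0, 0, 1) := by
  obtain ⟨u, s, r⟩ := p
  have hp : ((u, s, r) : ℝ × ℝ × ℝ) = u • (1, 0, 0) + s • (0, 1, 0) + r • (0, 0, 1) := by simp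
  rw [hp, map_add, map_add, map_smul, map_smul, map_smul]
  simp

theorem exists_lagrange_multipliers (hf : ConcaveOn ℝ C f) (hg : ConvexOn ℝ C g)
    (h : E →ₗ[ℝ] ℝ) {s₀ r₀ v : ℝ} (hslater : (0, s₀, r₀) ∈ interior (valueSet C f g h))
    (hv : ∀ x ∈ C, g x ≤ 0 → h x = s₀ → f x ≤ v) :
    ∃ lam ≥ (0 : ℝ), ∃ μ : ℝ, ∀ x ∈ C, f x - lam * g x - μ * (h x - s₀) ≤ v := by
  set A := valueSet C f g h
  have hvA : ∀ r, ((0 : ℝ), s₀, r) ∈ A → r ≤ v := by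
    rintro r ⟨x, hx, hgx, hhx, hfx⟩
    exact hfx.trans (hv x hx hgx hhx)
  have hxA : ((0 : ℝ), s₀, v) ∉ interior A := by
    intro hx
    have hcont : Continuous fun r : ℝ => ((0 : ℝ), s₀, r) := by fun_prop
    have hnear : ∀ᶠ r in 𝓝[>] v, ((0 : ℝ), s₀, r) ∈ interior A ∧ v < r :=
      (((hcont.tendsto v).eventually (isOpen_interior.mem_nhds hx)).filter_mono
        nhdsWithin_le_nhds).and self_mem_nhdsWithin
    obtain ⟨r, hrA, hvr⟩ := hnear.exists
    exact (hvA r (interior_subset hrA)).not_gt hvr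
  obtain ⟨F, hF0, hFA⟩ :=
    geometric_hahn_banach_of_nonempty_interior_point (convex_valueSet hf hg h) hxA ⟨_, hslater⟩
  -- a nonzero functional is an open map, so its bound on `A` is strict on `interior A`
  have hFint : F '' interior A ⊆ Iio (F (0, s₀, v)) := by
    rw [← interior_Iic]
    exact interior_maximal (image_subset_iff.2 fun p hp => hFA p (interior_subset hp))
      (F.isOpenMap_of_ne_zero hF0 _ isOpen_interior)
  set α := F (1, 0, 0)
  set β := F (0, 1, 0)
  set γ := F (0, 0, 1)
  have hF : ∀ p : ℝ × ℝ × ℝ, F p = p.1 * α + p.2.1 * β + p.2.2 * γ := F.apply_prod_prod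
  have hy₀ : (0, s₀, r₀) ∈ A := interior_subset hslater
  have hr₀ : r₀ ≤ v := hvA r₀ hy₀
  have hγ : 0 < γ := by
    have h₀ : F (0, s₀, r₀) < F (0, s₀, v) := hFint ⟨_, hslater, rfl⟩
    rw [hF, hF] at h₀
    nlinarith
  have hα : α ≤ 0 := by
    by_contra! hα
    obtain ⟨x, hx, hgx, hhx, hfx⟩ := hy₀
    set u := (γ * (v - r₀) + 1) / α
    have hu : α * u = γ * (v - r₀) + 1 := mul_div_cancel₀ _ hα.ne'
    have h₁ := hFA (u, s₀, r₀)
      ⟨x, hx, hgx.trans (div_nonneg (by nlinarith) hα.le), hhx, hfx⟩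
    rw [hF, hF] at h₁
    nlinarith
  refine ⟨-α / γ, div_nonneg (neg_nonneg.2 hα) hγ.le, -β / γ, fun x hx => ?_⟩
  have h₁ := hFA (g x, h x, f x) ⟨x, hx, le_rfl, rfl, le_rfl⟩
  rw [hF, hF] at h₁
  rw [← sub_nonneg]
  have hrw : v - (f x - -α / γ * g x - -β / γ * (h x - s₀))
      = (0 * α + s₀ * β + v * γ - (g x * α + h x * β + f x * γ)) / γ := by
    field_simp; ring
  rw [hrw]
  exact div_nonneg (sub_nonneg.2 h₁) hγ.le

end LagrangeMultipliers

@[norm_cast]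
theorem EReal.coe_finsetSum {ι : Type*} (s : Finset ι) (f : ι → ℝ) :
    ((∑ i ∈ s, f i : ℝ) : EReal) = ∑ i ∈ s, (f i : EReal) :=
  map_sum (⟨⟨Real.toEReal, EReal.coe_zero⟩, EReal.coe_add⟩ : ℝ →+ EReal) f s

section Perspective

variable (φ : ℝ → ℝ) {lam : ℝ} (s : ℝ)

theorem coe_le_mul_phiConj (hlam : 0 < lam) {t : ℝ} (ht : 0 ≤ t) :
    ((s * t - lam * φ t : ℝ) : EReal) ≤ lam * phiConj φ (s / lam) := by
  have h : ((s / lam * t - φ t : ℝ) : EReal) ≤ phiConj φ (s / lam) :=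
    le_iSup (fun t : {t : ℝ // 0 ≤ t} => ((s / lam * t.1 - φ t.1 : ℝ) : EReal)) ⟨t, ht⟩
  calc ((s * t - lam * φ t : ℝ) : EReal) = lam * ((s / lam * t - φ t : ℝ) : EReal) := by
        rw [← EReal.coe_mul]; congr 1; field_simp
    _ ≤ lam * phiConj φ (s / lam) := mul_le_mul_of_nonneg_left h (by exact_mod_cast hlam.le)

theorem coe_le_phiPerspective (hlam : 0 ≤ lam) {t : ℝ} (ht : 0 ≤ t) :
    ((s * t - lam * φ t : ℝ) : EReal) ≤ phiPerspective φ lam s := by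
  rcases hlam.eq_or_lt with rfl | hlam
  · rw [phiPerspective, if_pos rfl]
    have hlim : Tendsto (fun l : ℝ => ((s * t - l * φ t : ℝ) : EReal)) (𝓝[>] 0)
        (𝓝 ((s * t - 0 * φ t : ℝ) : EReal)) :=
      (EReal.continuous_coe_iff.2 (by fun_prop)).continuousAt.tendsto.mono_left nhdsWithin_le_nhds
    rw [← hlim.limsup_eq]
    exact limsup_le_limsup (eventually_nhdsWithin_of_forall fun l hl => coe_le_mul_phiConj φ s hl ht)
  · rw [phiPerspective, if_neg hlam.ne']
    exact coe_le_mul_phiConj φ s hlam ht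

theorem phiPerspective_le_coe (hlam : 0 < lam) {B : ℝ} (h : ∀ t, 0 ≤ t → s * t - lam * φ t ≤ B) :
    phiPerspective φ lam s ≤ B := by
  rw [phiPerspective, if_neg hlam.ne']
  have hconj : phiConj φ (s / lam) ≤ ((B / lam : ℝ) : EReal) := by
    refine iSup_le fun t => EReal.coe_le_coe_iff.2 ?_
    rw [le_div_iff₀ hlam]
    have ht : (s / lam * t.1 - φ t.1) * lam = s * t.1 - lam * φ t.1 := by field_simp
    exact ht ▸ h t.1 t.2
  calc (lam : EReal) * phiConj φ (s / lam) ≤ lam * ((B / lam : ℝ) : EReal) :=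
        mul_le_mul_of_nonneg_left hconj (by exact_mod_cast hlam.le)
    _ = B := by rw [← EReal.coe_mul, mul_div_cancel₀ _ hlam.ne']

end Perspective

section EmpiricalDRO

variable {n : ℕ} (φ : ℝ → ℝ) (ℓ : Fin n → ℝ) (δ : ℝ)

noncomputable def phiDiv (q : Fin n → ℝ) : ℝ :=
  (n : ℝ)⁻¹ * ∑ i, φ (n * q i)

noncomputable def lagrangian (lam μ : ℝ) (q : Fin n → ℝ) : ℝ :=
  ∑ i, q i * ℓ i - lam * (phiDiv φ q - δ) - μ * (∑ i, q i - 1)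

noncomputable def dualObjective (lam μ : ℝ) : EReal :=
  (((n : ℝ)⁻¹ : ℝ) : EReal) * (∑ i, phiPerspective φ lam (ℓ i - μ))
    + ((lam : ℝ) : EReal) * ((δ : ℝ) : EReal) + ((μ : ℝ) : EReal)

def primalValues : Set ℝ :=
  {r | ∃ q : Fin n → ℝ, (∀ i, 0 ≤ q i) ∧ ∑ i, q i = 1 ∧ phiDiv φ q ≤ δ ∧ r = ∑ i, q i * ℓ i}

variable {φ ℓ δ}

theorem primalValues_nonempty (hn : 0 < n) (hφ1 : φ 1 = 0) (hδ : 0 ≤ δ) :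
    (primalValues φ ℓ δ).Nonempty := by
  have hn' : (n : ℝ) ≠ 0 := Nat.cast_ne_zero.2 hn.ne'
  exact ⟨_, fun _ => (n : ℝ)⁻¹, fun _ => by positivity, by simp [hn'],
    by simp [phiDiv, hn', hφ1, hδ], rfl⟩

theorem bddAbove_primalValues : BddAbove (primalValues φ ℓ δ) := by
  refine ⟨∑ j, |ℓ j|, ?_⟩
  rintro _ ⟨q, hq, hsum, -, rfl⟩
  calc ∑ i, q i * ℓ i ≤ ∑ i, q i * ∑ j, |ℓ j| := sum_le_sum fun i _ =>
        mul_le_mul_of_nonneg_left ((le_abs_self _).trans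
          (single_le_sum (fun j _ => abs_nonneg (ℓ j)) (mem_univ i))) (hq i)
    _ = ∑ j, |ℓ j| := by rw [← sum_mul, hsum, one_mul]

theorem convexOn_phiDiv (hconv : ConvexOn ℝ (Ici 0) φ) :
    ConvexOn ℝ (univ.pi fun _ => Ici 0) (phiDiv (n := n) φ) := by
  refine ⟨convex_pi fun _ _ => convex_Ici 0, fun q hq q' hq' a b ha hb hab => ?_⟩
  simp only [mem_univ_pi, Set.mem_Ici] at hq hq'
  have hterm : ∀ i, φ (n * (a • q + b • q') i) ≤ a * φ (n * q i) + b * φ (n * q' i) := by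
    intro i
    have h := hconv.2 (Set.mem_Ici.2 (mul_nonneg n.cast_nonneg (hq i)))
      (Set.mem_Ici.2 (mul_nonneg n.cast_nonneg (hq' i))) ha hb hab
    simp only [smul_eq_mul] at h
    rwa [show (n : ℝ) * (a • q + b • q') i = a * (n * q i) + b * (n * q' i) by
      simp only [Pi.add_apply, Pi.smul_apply, smul_eq_mul]; ring]
  calc phiDiv φ (a • q + b • q') ≤ (n : ℝ)⁻¹ * ∑ i, (a * φ (n * q i) + b * φ (n * q' i)) := by
        unfold phiDiv; gcongr with i; exact hterm i
    _ = a • phiDiv φ q + b • phiDiv φ q' := by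
        simp only [phiDiv, sum_add_distrib, ← mul_sum, smul_eq_mul]; ring

theorem lagrangian_eq (hn : n ≠ 0) (lam μ : ℝ) (q : Fin n → ℝ) :
    lagrangian φ ℓ δ lam μ q
      = (n : ℝ)⁻¹ * ∑ i, ((ℓ i - μ) * (n * q i) - lam * φ (n * q i)) + lam * δ + μ := by
  have hn' : (n : ℝ) ≠ 0 := Nat.cast_ne_zero.2 hn
  have hsum : ∑ i, ((ℓ i - μ) * (n * q i) - lam * φ (n * q i))
      = n * ∑ i, q i * ℓ i - n * μ * ∑ i, q i - lam * ∑ i, φ (n * q i) := by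
    simp only [mul_sum, ← sum_sub_distrib]
    exact sum_congr rfl fun i _ => by ring
  rw [lagrangian, phiDiv, hsum]
  field_simp
  ring

theorem sum_mul_le_lagrangian {lam : ℝ} (hlam : 0 ≤ lam) (μ : ℝ) {q : Fin n → ℝ}
    (hq : ∑ i, q i = 1) (hdiv : phiDiv φ q ≤ δ) :
    ∑ i, q i * ℓ i ≤ lagrangian φ ℓ δ lam μ q := by
  rw [lagrangian, hq, sub_self, mul_zero, sub_zero]
  nlinarith

theorem lagrangian_le_dualObjective (hn : 0 < n) {lam : ℝ} (hlam : 0 ≤ lam) (μ : ℝ)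
    {q : Fin n → ℝ} (hq : ∀ i, 0 ≤ q i) :
    (lagrangian φ ℓ δ lam μ q : EReal) ≤ dualObjective φ ℓ δ lam μ := by
  rw [lagrangian_eq hn.ne', dualObjective]
  push_cast
  gcongr with i
  exact coe_le_phiPerspective φ _ hlam (mul_nonneg n.cast_nonneg (hq i))

theorem dualObjective_le_of_forall_lagrangian_le (hn : 0 < n) {lam μ w : ℝ} (hlam : 0 < lam)
    (h : ∀ q : Fin n → ℝ, (∀ i, 0 ≤ q i) → lagrangian φ ℓ δ lam μ q ≤ w) :
    dualObjective φ ℓ δ lam μ ≤ w := by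
  have hn' : (0 : ℝ) < n := Nat.cast_pos.2 hn
  set g : Fin n → {t : ℝ // 0 ≤ t} → ℝ := fun i t => (ℓ i - μ) * t - lam * φ t
  have hsep : ∀ t : Fin n → {t : ℝ // 0 ≤ t}, ∑ i, g i (t i) ≤ n * (w - lam * δ - μ) := by
    intro t
    have h' := h (fun i => (t i : ℝ) / n) fun i => div_nonneg (t i).2 hn'.le
    simp only [lagrangian_eq hn.ne', mul_div_cancel₀ _ hn'.ne'] at h'
    rw [← inv_mul_le_iff₀ hn']
    linarith
  have hbdd := bddAbove_range_of_forall_sum_le hsep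
  calc dualObjective φ ℓ δ lam μ
      ≤ (((n : ℝ)⁻¹ : ℝ) : EReal) * ((∑ i, ⨆ t, g i t : ℝ) : EReal) + lam * δ + μ := by
        rw [dualObjective]
        push_cast
        gcongr with i
        exact phiPerspective_le_coe φ _ hlam fun t ht => le_ciSup (hbdd i) ⟨t, ht⟩
    _ ≤ ((n : ℝ)⁻¹ * (n * (w - lam * δ - μ)) + lam * δ + μ : ℝ) := by
        push_cast
        gcongr
        exact_mod_cast sum_ciSup_le_of_forall_sum_le hsep
    _ = w := by rw [inv_mul_cancel_left₀ hn'.ne']; congr 1; ring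

theorem exists_lagrangian_le (hn : 0 < n) (hconv : ConvexOn ℝ (Ici 0) φ) (hφ1 : φ 1 = 0)
    (hδ : 0 < δ) {v : ℝ}
    (hv : ∀ q : Fin n → ℝ, (∀ i, 0 ≤ q i) → ∑ i, q i = 1 → phiDiv φ q ≤ δ → ∑ i, q i * ℓ i ≤ v) :
    ∃ lam ≥ (0 : ℝ), ∃ μ : ℝ, ∀ q : Fin n → ℝ, (∀ i, 0 ≤ q i) → lagrangian φ ℓ δ lam μ q ≤ v := by
  have hn' : (n : ℝ) ≠ 0 := Nat.cast_ne_zero.2 hn.ne'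
  set C : Set (Fin n → ℝ) := univ.pi fun _ => Ici 0
  have hC : Convex ℝ C := convex_pi fun _ _ => convex_Ici 0
  set f : (Fin n → ℝ) →ₗ[ℝ] ℝ := ∑ i, ℓ i • LinearMap.proj i
  set h : (Fin n → ℝ) →ₗ[ℝ] ℝ := ∑ i, LinearMap.proj i
  have hf : ∀ q, f q = ∑ i, q i * ℓ i := fun q => by simp [f, mul_comm]
  have hh : ∀ q, h q = ∑ i, q i := fun q => by simp [h]
  set g := phiDiv (n := n) φ - fun _ => δ
  have hg : ConvexOn ℝ C g := (convexOn_phiDiv hconv).sub (concaveOn_const δ hC)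
  set m := (n : ℝ)⁻¹ * ∑ i, ℓ i
  -- Slater point: every `p` near `(0, 1, m - 1)` is attained by the constant weights `p.2.1 / n`
  have hslater : ((0 : ℝ), (1 : ℝ), m - 1) ∈ interior (valueSet C f g h) := by
    rw [mem_interior_iff_mem_nhds]
    have hφc : ContinuousAt φ 1 :=
      hconv.continuousOn_interior.continuousAt (by rw [interior_Ici]; exact Ioi_mem_nhds one_pos)
    have hs : ContinuousAt (fun p : ℝ × ℝ × ℝ => p.2.1) (0, 1, m - 1) := by fun_prop
    have h₁ : ∀ᶠ p : ℝ × ℝ × ℝ in 𝓝 (0, 1, m - 1), 0 < p.2.1 :=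
      continuousAt_const.eventually_lt hs zero_lt_one
    have h₂ : ∀ᶠ p : ℝ × ℝ × ℝ in 𝓝 (0, 1, m - 1), φ p.2.1 - δ < p.1 :=
      ((hφc.comp_of_eq hs rfl).sub continuousAt_const).eventually_lt (by fun_prop)
        (by simp [hφ1, hδ])
    have h₃ : ∀ᶠ p : ℝ × ℝ × ℝ in 𝓝 (0, 1, m - 1), p.2.2 < p.2.1 * m :=
      ContinuousAt.eventually_lt (by fun_prop) (by fun_prop) (by simp)
    filter_upwards [h₁, h₂, h₃] with p hp₁ hp₂ hp₃
    refine ⟨fun _ => p.2.1 / n, mem_univ_pi.2 fun _ => div_nonneg hp₁.le n.cast_nonneg, ?_, ?_, ?_⟩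
    · simp only [g, phiDiv, Pi.sub_apply, mul_div_cancel₀ _ hn', sum_const, card_univ,
        Fintype.card_fin, nsmul_eq_mul, inv_mul_cancel_left₀ hn']
      exact hp₂.le
    · simp only [hh, sum_const, card_univ, Fintype.card_fin, nsmul_eq_mul]
      field_simp
    · have hmean : ∑ i, p.2.1 / n * ℓ i = p.2.1 * m := by
        simp only [m, mul_sum, div_eq_mul_inv]
        exact sum_congr rfl fun _ _ => by ring
      rw [hf, hmean]
      exact hp₃.le
  obtain ⟨lam, hlam, μ, hmult⟩ := exists_lagrange_multipliers (f.concaveOn hC) hg h hslater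
    fun q hq hgq hhq => by
      rw [hf]
      exact hv q (mem_univ_pi.1 hq) (hh q ▸ hhq) (sub_nonpos.1 hgq)
  refine ⟨lam, hlam, μ, fun q hq => ?_⟩
  simpa only [lagrangian, hf, hh, g, Pi.sub_apply] using hmult q (mem_univ_pi.2 hq)

theorem lagrangian_add_le (hn : 0 < n) {k : ℝ} (hk : ∀ t, 0 ≤ t → k * (t - 1) ≤ φ t) {e : ℝ}
    (he : 0 ≤ e) (lam μ : ℝ) {q : Fin n → ℝ} (hq : ∀ i, 0 ≤ q i) :
    lagrangian φ ℓ δ (lam + e) (μ - e * k) q ≤ lagrangian φ ℓ δ lam μ q + e * δ := by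
  have hn' : (n : ℝ) ≠ 0 := Nat.cast_ne_zero.2 hn.ne'
  have hminor : k * (∑ i, q i - 1) ≤ phiDiv φ q :=
    calc k * (∑ i, q i - 1) = (n : ℝ)⁻¹ * ∑ i, k * (n * q i - 1) := by
          simp only [mul_sub, sum_sub_distrib, ← mul_sum, sum_const, card_univ, Fintype.card_fin,
            nsmul_eq_mul]
          field_simp
      _ ≤ phiDiv φ q := by
          unfold phiDiv
          gcongr with i
          exact hk _ (mul_nonneg n.cast_nonneg (hq i))
  simp only [lagrangian]
  nlinarith [mul_le_mul_of_nonneg_left hminor he]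

theorem sSup_primalValues_le_dualObjective (hn : 0 < n) (hφ1 : φ 1 = 0) (hδ : 0 ≤ δ) {lam : ℝ}
    (hlam : 0 ≤ lam) (μ : ℝ) :
    ((sSup (primalValues φ ℓ δ) : ℝ) : EReal) ≤ dualObjective φ ℓ δ lam μ := by
  refine EReal.le_of_forall_lt_iff_le.1 fun z hz =>
    EReal.coe_le_coe_iff.2 (csSup_le (primalValues_nonempty hn hφ1 hδ) ?_)
  rintro _ ⟨q, hq, hsum, hdiv, rfl⟩
  have hweak : ((∑ i, q i * ℓ i : ℝ) : EReal) ≤ dualObjective φ ℓ δ lam μ :=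
    (EReal.coe_le_coe_iff.2 (sum_mul_le_lagrangian hlam μ hsum hdiv)).trans
      (lagrangian_le_dualObjective hn hlam μ hq)
  exact EReal.coe_le_coe_iff.1 (hweak.trans hz.le)

theorem iInf_dualObjective_le_sSup_primalValues (hn : 0 < n) (hconv : ConvexOn ℝ (Ici 0) φ)
    (hφ1 : φ 1 = 0) (hδ : 0 < δ) :
    ⨅ lam : {l : ℝ // 0 ≤ l}, ⨅ μ : ℝ, dualObjective φ ℓ δ lam.1 μ
      ≤ ((sSup (primalValues φ ℓ δ) : ℝ) : EReal) := by
  obtain ⟨lam, hlam, μ, hL⟩ := exists_lagrangian_le hn hconv hφ1 hδ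
    fun q hq hsum hdiv => le_csSup bddAbove_primalValues ⟨q, hq, hsum, hdiv, rfl⟩
  obtain ⟨k, hk⟩ := hconv.exists_affine_le (x := 1) (by simp)
  refine EReal.le_of_forall_lt_iff_le.1 fun z hz => ?_
  set e := (z - sSup (primalValues φ ℓ δ)) / δ
  have he : 0 < e := div_pos (sub_pos.2 (EReal.coe_lt_coe_iff.1 hz)) hδ
  calc _ ≤ dualObjective φ ℓ δ (lam + e) (μ - e * k) :=
        (iInf_le _ ⟨lam + e, by positivity⟩).trans (iInf_le _ (μ - e * k))
    _ ≤ z := dualObjective_le_of_forall_lagrangian_le hn (by positivity) fun q hq =>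
        (lagrangian_add_le hn (fun t ht => by simpa [hφ1] using hk t ht) he.le lam μ hq).trans
          (by rw [div_mul_cancel₀ _ hδ.ne']; linarith [hL q hq])

end EmpiricalDRO

theorem phi_divergence_dro_duality_general {n : ℕ} (hn : 0 < n)
    (φ : ℝ → ℝ) (hconv : ConvexOn ℝ (Set.Ici 0) φ)
    (hφ1 : φ 1 = 0)
    (ℓ : Fin n → ℝ) (δ : ℝ) (hδ : 0 < δ) :
    ((sSup {r : ℝ | ∃ qv : Fin n → ℝ, (∀ i, 0 ≤ qv i) ∧ (∑ i, qv i) = 1 ∧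
        (n : ℝ)⁻¹ * ∑ i, φ ((n : ℝ) * qv i) ≤ δ ∧ r = ∑ i, qv i * ℓ i} : ℝ) : EReal)
      = ⨅ lam : {l : ℝ // 0 ≤ l}, ⨅ μ : ℝ,
          (((n : ℝ)⁻¹ : ℝ) : EReal) * (∑ i, phiPerspective φ lam.1 (ℓ i - μ))
            + ((lam.1 : ℝ) : EReal) * ((δ : ℝ) : EReal) + ((μ : ℝ) : EReal) := by
  exact le_antisymm (le_iInf₂ fun lam μ => sSup_primalValues_le_dualObjective hn hφ1 hδ.le lam.2 μ)
    (iInf_dualObjective_le_sSup_primalValues hn hconv hφ1 hδ)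

/-- **Strong duality for φ-divergence DRO over an empirical measure** (Shapiro 2017):
sup_{Q : D_φ(Q,P̂ₙ) ≤ δ} E_Q[ℓ] = inf_{λ ≥ 0, μ} { E_{P̂ₙ}[λφ*((ℓ − μ)/λ)] + λδ + μ }. -/
theorem phi_divergence_dro_duality {n : ℕ} (hn : 0 < n)
    (φ : ℝ → ℝ) (hconv : ConvexOn ℝ (Set.Ici 0) φ)
    (hlsc : LowerSemicontinuousOn φ (Set.Ici 0)) (hφ1 : φ 1 = 0)
    (ℓ : Fin n → ℝ) (δ : ℝ) (hδ : 0 < δ) :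
    ((sSup {r : ℝ | ∃ qv : Fin n → ℝ, (∀ i, 0 ≤ qv i) ∧ (∑ i, qv i) = 1 ∧
        (n : ℝ)⁻¹ * ∑ i, φ ((n : ℝ) * qv i) ≤ δ ∧ r = ∑ i, qv i * ℓ i} : ℝ) : EReal)
      = ⨅ lam : {l : ℝ // 0 ≤ l}, ⨅ μ : ℝ,
          (((n : ℝ)⁻¹ : ℝ) : EReal) * (∑ i, phiPerspective φ lam.1 (ℓ i - μ))
            + ((lam.1 : ℝ) : EReal) * ((δ : ℝ) : EReal) + ((μ : ℝ) : EReal) :=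
  phi_divergence_dro_duality_general hn φ hconv hφ1 ℓ δ hδ
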